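/- Let G ⊆ {1,…,N} and suppose (1/|G|)Σ_{i∈G}((Xⁱ−μ)ᵀv)² ≤ B‖v‖₂² for all v ∈ R^d. Let p ∈ (0,|G|) and w̃ ∈ Δ_{G,p}. Then ‖Σ_{i∈G} w̃⁽ⁱ⁾(Xⁱ−μ)‖₂² ≤ B·|G|/p. -/
import Mathlib


open scoped RealInnerProductSpace BigOperators

/-- If `(1/|G|)Σ_{i∈G}((Xⁱ−μ)ᵀv)² ≤ B‖v‖²` for all `v`, `p ∈ (0,|G|)`, and
`w̃ ∈ Δ_{G,p}`, then `‖Σ_{i∈G} w̃⁽ⁱ⁾(Xⁱ−μ)‖² ≤ B·|G|/p`. -/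
theorem stmt13 {N d : ℕ} (B p : ℝ) (hB : 0 < B)
    (G : Finset (Fin N)) (hp0 : 0 < p) (hpG : p < (G.card : ℝ))
    (X : Fin N → EuclideanSpace ℝ (Fin d)) (μ : EuclideanSpace ℝ (Fin d))
    (hQ : ∀ v : EuclideanSpace ℝ (Fin d),
      (1 / (G.card : ℝ)) * ∑ i ∈ G, ⟪X i - μ, v⟫ ^ 2 ≤ B * ‖v‖ ^ 2)
    (tw : Fin N → ℝ) (htw0 : ∀ i, 0 ≤ tw i) (htw1 : ∑ i, tw i = 1)
    (htwsupp : ∀ i ∉ G, tw i = 0) (htwmax : ∀ i, tw i ≤ 1 / p) :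
    ‖∑ i ∈ G, tw i • (X i - μ)‖ ^ 2 ≤ B * (G.card : ℝ) / p := by
  set v : EuclideanSpace ℝ (Fin d) := ∑ i ∈ G, tw i • (X i - μ) with hv
  have hGcard : (0:ℝ) < (G.card : ℝ) := lt_trans hp0 hpG
  have hsumG : ∑ i ∈ G, tw i = 1 := by
    rw [← htw1]
    exact Finset.sum_subset (Finset.subset_univ G) (fun i _ hi => htwsupp i hi)
  have hnv : ‖v‖ ^ 2 = ∑ i ∈ G, tw i * ⟪X i - μ, v⟫ := by
    rw [← real_inner_self_eq_norm_sq]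
    nth_rewrite 1 [hv]
    rw [sum_inner]
    exact Finset.sum_congr rfl fun i _ => real_inner_smul_left _ _ _
  -- Cauchy-Schwarz
  have hCS : (∑ i ∈ G, tw i * ⟪X i - μ, v⟫) ^ 2 ≤ ∑ i ∈ G, tw i * ⟪X i - μ, v⟫ ^ 2 := by
    have h := Finset.sum_mul_sq_le_sq_mul_sq G
      (fun i => Real.sqrt (tw i)) (fun i => Real.sqrt (tw i) * ⟪X i - μ, v⟫)
    have e1 : (∑ i ∈ G, Real.sqrt (tw i) * (Real.sqrt (tw i) * ⟪X i - μ, v⟫))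
        = ∑ i ∈ G, tw i * ⟪X i - μ, v⟫ :=
      Finset.sum_congr rfl fun i _ => by rw [← mul_assoc, Real.mul_self_sqrt (htw0 i)]
    have e2 : (∑ i ∈ G, Real.sqrt (tw i) ^ 2) = 1 := by
      rw [Finset.sum_congr rfl fun i _ => Real.sq_sqrt (htw0 i), hsumG]
    have e3 : (∑ i ∈ G, (Real.sqrt (tw i) * ⟪X i - μ, v⟫) ^ 2)
        = ∑ i ∈ G, tw i * ⟪X i - μ, v⟫ ^ 2 :=
      Finset.sum_congr rfl fun i _ => by rw [mul_pow, Real.sq_sqrt (htw0 i)]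
    rw [e1, e2, e3, one_mul] at h
    exact h
  have hW : ∑ i ∈ G, tw i * ⟪X i - μ, v⟫ ^ 2 ≤ (1/p) * ∑ i ∈ G, ⟪X i - μ, v⟫ ^ 2 := by
    rw [Finset.mul_sum]
    refine Finset.sum_le_sum fun i _ => ?_
    exact mul_le_mul_of_nonneg_right (htwmax i) (sq_nonneg _)
  have hQv := hQ v
  have hsum : ∑ i ∈ G, ⟪X i - μ, v⟫ ^ 2 ≤ (G.card : ℝ) * (B * ‖v‖ ^ 2) := by
    rw [div_mul_eq_mul_div, one_mul, div_le_iff₀ hGcard] at hQv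
    linarith [hQv]
  have key : (‖v‖ ^ 2) ^ 2 ≤ (B * (G.card : ℝ) / p) * ‖v‖ ^ 2 := by
    rw [hnv]
    calc (∑ i ∈ G, tw i * ⟪X i - μ, v⟫) ^ 2
        ≤ ∑ i ∈ G, tw i * ⟪X i - μ, v⟫ ^ 2 := hCS
      _ ≤ (1/p) * ∑ i ∈ G, ⟪X i - μ, v⟫ ^ 2 := hW
      _ ≤ (1/p) * ((G.card : ℝ) * (B * ‖v‖ ^ 2)) := by
          exact mul_le_mul_of_nonneg_left hsum (by positivity)
      _ = (B * (G.card : ℝ) / p) * ‖v‖ ^ 2 := by ring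
      _ = (B * (G.card : ℝ) / p) * (∑ i ∈ G, tw i * ⟪X i - μ, v⟫) := by rw [← hnv]
  rcases eq_or_lt_of_le (norm_nonneg v) with h0 | h0
  · rw [← h0]; norm_num; positivity
  · have hv2 : 0 < ‖v‖ ^ 2 := by positivity
    nlinarith [key]
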